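/- arXiv:math/9807119 — 5 statements merged into one kernel-verified Lean document; each statement's English description precedes it below -/
import Mathlib

section
/- Let S be a finite nonabelian simple group, K a group with no subgroup isomorphic to S (e.g. K has strictly smaller order), and N a normal subgroup of Sⁿ × K whose projection to Sⁿ is X and whose projection to K is Y. Then N = X × Y. -/
/-- If S is a finite nonabelian simple group and K has no subgroup isomorphic
to S, then every normal subgroup of Sⁿ × K is the product of its projections. -/
theorem normal_subgroup_of_pow_prod
    {S K : Type*} [Group S] [Group K] [Finite S] [Finite K]
    [IsSimpleGroup S]
    (hnonab : ¬ ∀ a b : S, a * b = b * a)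
    (hK : ¬ ∃ H : Subgroup K, Nonempty (H ≃* S))
    {n : ℕ} (N : Subgroup ((Fin n → S) × K)) (hN : N.Normal) :
    N = (N.map (MonoidHom.fst (Fin n → S) K)).prod (N.map (MonoidHom.snd (Fin n → S) K)) := by
  classical
  -- the center of S is trivial
  have hZ : Subgroup.center S = ⊥ := by
    rcases IsSimpleGroup.eq_bot_or_eq_top_of_normal (Subgroup.center S) inferInstance with h | h
    · exact h
    · exfalso
      apply hnonab
      intro a b
      have ha : a ∈ Subgroup.center S := by rw [h]; trivial
      exact (Subgroup.mem_center_iff.mp ha b).symm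
  have hnc : ∀ a : S, a ≠ 1 → ∃ s : S, s * a * s⁻¹ * a⁻¹ ≠ 1 := by
    intro a ha
    by_contra h
    push_neg at h
    have : a ∈ Subgroup.center S := by
      rw [Subgroup.mem_center_iff]
      intro s
      have := h s
      have hs : s * a * s⁻¹ * a⁻¹ = 1 := this
      have h1 : s * a * s⁻¹ = a := by
        have := mul_eq_one_iff_eq_inv.mp hs
        simpa using this
      calc s * a = s * a * s⁻¹ * s := by group
        _ = a * s := by rw [h1]
    rw [hZ, Subgroup.mem_bot] at this
    exact ha this
  set M : Subgroup (Fin n → S) := N.comap (MonoidHom.inl (Fin n → S) K) with hMdef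
  have hMnormal : M.Normal := hN.comap _
  have hmemM : ∀ x : Fin n → S, x ∈ M ↔ ((x, (1 : K)) : (Fin n → S) × K) ∈ N := by
    intro x; rfl
  -- commutators of first coordinates with elements of G land in M
  have hM0 : ∀ p ∈ N, ∀ g : Fin n → S, g * p.1 * g⁻¹ * p.1⁻¹ ∈ M := by
    intro p hp g
    have h1 : ((g, (1 : K)) : (Fin n → S) × K) * p * ((g, (1 : K)) : (Fin n → S) × K)⁻¹ ∈ N :=
      hN.conj_mem p hp (g, 1)
    have h2 := N.mul_mem h1 (N.inv_mem hp)
    rw [hmemM]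
    have : ((g, (1 : K)) : (Fin n → S) × K) * p * ((g, (1 : K)) : (Fin n → S) × K)⁻¹ * p⁻¹
        = ((g * p.1 * g⁻¹ * p.1⁻¹, (1 : K)) : (Fin n → S) × K) := by
      ext <;> simp [mul_assoc]
    rwa [this] at h2
  -- the key step : X × 1 ≤ N
  have hXN : ∀ p ∈ N, ((p.1, (1 : K)) : (Fin n → S) × K) ∈ N := by
    intro p hp
    rw [← hmemM]
    apply Subgroup.pi_mem_of_mulSingle_mem
    intro i
    by_cases hpi : p.1 i = 1
    · rw [hpi, Pi.mulSingle_one]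
      exact M.one_mem
    · obtain ⟨s, hs⟩ := hnc (p.1 i) hpi
      have hc : Pi.mulSingle i (s * p.1 i * s⁻¹ * (p.1 i)⁻¹) ∈ M := by
        have h1 := hM0 p hp (Pi.mulSingle i s)
        have : Pi.mulSingle i s * p.1 * (Pi.mulSingle i s)⁻¹ * p.1⁻¹
            = Pi.mulSingle i (s * p.1 i * s⁻¹ * (p.1 i)⁻¹) := by
          funext j
          by_cases hj : j = i
          · subst hj; simp
          · simp [Pi.mulSingle_apply, hj]
        rwa [this] at h1
      -- the comap of M under mulSingle i is a normal subgroup of S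
      have hnorm : (M.comap (MonoidHom.mulSingle (fun _ : Fin n => S) i)).Normal :=
        hMnormal.comap _
      rcases IsSimpleGroup.eq_bot_or_eq_top_of_normal _ hnorm with hbot | htop
      · exfalso
        have : s * p.1 i * s⁻¹ * (p.1 i)⁻¹ ∈
            M.comap (MonoidHom.mulSingle (fun _ : Fin n => S) i) := hc
        rw [hbot, Subgroup.mem_bot] at this
        exact hs this
      · have : p.1 i ∈ M.comap (MonoidHom.mulSingle (fun _ : Fin n => S) i) := by
          rw [htop]; trivial
        exact this
  apply le_antisymm
  · intro p hp
    exact ⟨⟨p, hp, rfl⟩, ⟨p, hp, rfl⟩⟩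
  · rintro ⟨a, b⟩ ⟨ha, hb⟩
    obtain ⟨q, hq, rfl⟩ := hb
    obtain ⟨r, hr, rfl⟩ := ha
    have h1 : ((r.1, (1 : K)) : (Fin n → S) × K) ∈ N := hXN r hr
    have h2 : ((q.1, (1 : K)) : (Fin n → S) × K) ∈ N := hXN q hq
    have h3 : ((q.1, (1 : K)) : (Fin n → S) × K)⁻¹ * q ∈ N := N.mul_mem (N.inv_mem h2) hq
    have h4 := N.mul_mem h1 h3
    have : ((r.1, (1 : K)) : (Fin n → S) × K) * (((q.1, (1 : K)) : (Fin n → S) × K)⁻¹ * q)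
        = ((r.1, q.2) : (Fin n → S) × K) := by
      ext <;> simp
    rwa [this] at h4
end

section
/- For n ≥ 4, identify Aₙ with the subgroup of the symmetric group S_{n+1} consisting of even permutations fixing the letter n+1. Then the centralizer of Aₙ in S_{n+1} is trivial. -/
/-- For n ≥ 4, the centralizer in S_{n+1} of Aₙ (the even permutations fixing
the letter n+1) is trivial. -/
theorem centralizer_An_in_Snplus1_trivial {n : ℕ} (hn : 4 ≤ n) :
    Subgroup.centralizer
      ((alternatingGroup (Fin (n + 1)) ⊓
        MulAction.stabilizer (Equiv.Perm (Fin (n + 1))) (Fin.last n) :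
          Subgroup (Equiv.Perm (Fin (n + 1)))) : Set (Equiv.Perm (Fin (n + 1)))) = ⊥ := by
  rw [eq_bot_iff]
  intro g hg
  rw [Subgroup.mem_centralizer_iff] at hg
  rw [Subgroup.mem_bot]
  have key : ∀ y : Fin (n + 1), y ≠ Fin.last n → g y = y := by
    intro y hy
    by_contra hgy
    set T : Finset (Fin (n + 1)) := {Fin.last n, y, g y} with hT
    have hcard : 1 < (Finset.univ \ T).card := by
      have h1 : T.card ≤ 3 := by
        refine le_trans (Finset.card_insert_le _ _) ?_
        have h2 := Finset.card_insert_le y ({g y} : Finset (Fin (n + 1)))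
        simp only [Finset.card_singleton] at h2 ⊢
        omega
      have h2 : (Finset.univ \ T).card = (n + 1) - T.card := by
        rw [Finset.card_sdiff_of_subset (Finset.subset_univ T), Finset.card_univ, Fintype.card_fin]
      omega
    obtain ⟨a, ha, b, hb, hab⟩ := Finset.one_lt_card.mp hcard
    simp only [hT, Finset.mem_sdiff, Finset.mem_univ, true_and, Finset.mem_insert,
      Finset.mem_singleton, not_or] at ha hb
    obtain ⟨ha1, ha2, ha3⟩ := ha
    obtain ⟨hb1, hb2, hb3⟩ := hb
    set t : Equiv.Perm (Fin (n + 1)) := Equiv.swap y a * Equiv.swap a b with ht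
    have hmem : t ∈ ((alternatingGroup (Fin (n + 1)) ⊓
        MulAction.stabilizer (Equiv.Perm (Fin (n + 1))) (Fin.last n) :
          Subgroup (Equiv.Perm (Fin (n + 1)))) : Set (Equiv.Perm (Fin (n + 1)))) := by
      rw [SetLike.mem_coe, Subgroup.mem_inf]
      constructor
      · rw [Equiv.Perm.mem_alternatingGroup, ht, map_mul,
          Equiv.Perm.sign_swap (fun h => ha2 h.symm), Equiv.Perm.sign_swap hab]
        norm_num
      · show t • Fin.last n = Fin.last n
        rw [ht]
        show (Equiv.swap y a) ((Equiv.swap a b) (Fin.last n)) = Fin.last n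
        rw [Equiv.swap_apply_of_ne_of_ne (Ne.symm ha1) (Ne.symm hb1),
          Equiv.swap_apply_of_ne_of_ne (Ne.symm hy) (Ne.symm ha1)]
    have hcomm := hg t hmem
    have happ : t (g y) = g (t y) := by
      have := congrArg (fun p : Equiv.Perm (Fin (n + 1)) => p y) hcomm
      simpa [Equiv.Perm.mul_apply] using this
    have hty : t y = a := by
      rw [ht]
      show (Equiv.swap y a) ((Equiv.swap a b) y) = a
      rw [Equiv.swap_apply_of_ne_of_ne (Ne.symm ha2) (Ne.symm hb2), Equiv.swap_apply_left]
    have htgy : t (g y) = g y := by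
      rw [ht]
      show (Equiv.swap y a) ((Equiv.swap a b) (g y)) = g y
      rw [Equiv.swap_apply_of_ne_of_ne (Ne.symm ha3) (Ne.symm hb3),
        Equiv.swap_apply_of_ne_of_ne hgy (Ne.symm ha3)]
    rw [htgy, hty] at happ
    exact ha2 (g.injective happ).symm
  apply Equiv.ext
  intro x
  simp only [Equiv.Perm.coe_one, id_eq]
  rcases eq_or_ne x (Fin.last n) with rfl | hx
  · by_contra h
    exact h (g.injective (key (g (Fin.last n)) h))
  · exact key x hx
end

section
/- Let n = mk with m > 2 and k > 1, and let Π = {Δ₁,…,Δ_k} be a partition of {1,…,n} into k blocks each of size m. Let H = (S_m ≀ S_k) ∩ Aₙ be the group of even permutations preserving Π. Then the centralizer of H in Sₙ is trivial. -/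
private lemma swap_block_fst {k m : ℕ} (c : Fin k) (u v : Fin m) (d : Fin k) (w : Fin m) :
    ((Equiv.swap ((c, u) : Fin k × Fin m) (c, v)) (d, w)).1 = d := by
  rcases eq_or_ne ((d, w) : Fin k × Fin m) (c, u) with h | h
  · rw [h, Equiv.swap_apply_left]
    exact (congrArg Prod.fst h).symm
  · rcases eq_or_ne ((d, w) : Fin k × Fin m) (c, v) with h' | h'
    · rw [h', Equiv.swap_apply_right]
      exact (congrArg Prod.fst h').symm
    · rw [Equiv.swap_apply_of_ne_of_ne h h']

private lemma key_mem {α : Type*} [DecidableEq α] (s t u v w : α)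
    (h : (Equiv.swap s t * Equiv.swap u v) w ≠ w) :
    w = s ∨ w = t ∨ w = u ∨ w = v := by
  by_contra hcon
  push_neg at hcon
  obtain ⟨h1, h2, h3, h4⟩ := hcon
  exact h (by
    rw [Equiv.Perm.mul_apply, Equiv.swap_apply_of_ne_of_ne h3 h4,
      Equiv.swap_apply_of_ne_of_ne h1 h2])

private lemma tau_mem {m k : ℕ} (i j : Fin k) (u₁ u₂ v₁ v₂ : Fin m)
    (h1 : u₁ ≠ u₂) (h2 : v₁ ≠ v₂) :
    Equiv.swap ((i, u₁) : Fin k × Fin m) (i, u₂) * Equiv.swap (j, v₁) (j, v₂) ∈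
      {σ : Equiv.Perm (Fin k × Fin m) |
        σ ∈ alternatingGroup (Fin k × Fin m) ∧
          ∀ a : Fin k, ∃ b : Fin k, ∀ x : Fin m, (σ (a, x)).1 = b} := by
  constructor
  · have hne1 : ((i, u₁) : Fin k × Fin m) ≠ (i, u₂) := fun h => h1 (congrArg Prod.snd h)
    have hne2 : ((j, v₁) : Fin k × Fin m) ≠ (j, v₂) := fun h => h2 (congrArg Prod.snd h)
    rw [Equiv.Perm.mem_alternatingGroup, map_mul, Equiv.Perm.sign_swap hne1,
      Equiv.Perm.sign_swap hne2]
    norm_num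
  · intro a
    refine ⟨a, fun w => ?_⟩
    rw [Equiv.Perm.mul_apply]
    have h3 := swap_block_fst j v₁ v₂ a w
    obtain ⟨b, hb⟩ : ∃ b, (Equiv.swap ((j, v₁) : Fin k × Fin m) (j, v₂)) (a, w) = (a, b) :=
      ⟨_, Prod.ext_iff.mpr ⟨h3, rfl⟩⟩
    rw [hb, swap_block_fst]

/-- Let n = mk with m > 2, k > 1, and partition the n letters (modelled as
Fin k × Fin m) into the k blocks {i} × Fin m of size m.  The centralizer in Sₙ
of the group H of even permutations preserving this partition is trivial. -/
theorem centralizer_imprimitive_trivial {m k : ℕ} (hm : 2 < m) (hk : 1 < k) :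
    Subgroup.centralizer
      {σ : Equiv.Perm (Fin k × Fin m) |
        σ ∈ alternatingGroup (Fin k × Fin m) ∧
          ∀ i : Fin k, ∃ j : Fin k, ∀ x : Fin m, (σ (i, x)).1 = j} = ⊥ := by
  rw [eq_bot_iff]
  intro c hc
  rw [Subgroup.mem_centralizer_iff] at hc
  rw [Subgroup.mem_bot]
  apply Equiv.ext
  intro a
  obtain ⟨i, x⟩ := a
  rw [Equiv.Perm.one_apply]
  haveI : Nontrivial (Fin k) := Fin.nontrivial_iff_two_le.mpr hk
  obtain ⟨j, hj⟩ := exists_ne i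
  -- get y z distinct from x and each other
  have hm3 : 3 ≤ m := hm
  haveI : Nontrivial (Fin m) := Fin.nontrivial_iff_two_le.mpr (by omega)
  obtain ⟨y, hyx⟩ := exists_ne x
  obtain ⟨z, hz⟩ : ∃ z : Fin m, z ∉ ({x, y} : Finset (Fin m)) := by
    have hcard : ({x, y} : Finset (Fin m)).card < Fintype.card (Fin m) := by
      have := Finset.card_insert_le x ({y} : Finset (Fin m))
      simp only [Finset.card_singleton, Fintype.card_fin] at *
      omega
    have hpos : 0 < ({x, y} : Finset (Fin m))ᶜ.card := by
      rw [Finset.card_compl]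
      omega
    obtain ⟨z, hz⟩ := Finset.card_pos.mp hpos
    exact ⟨z, (Finset.mem_compl.mp hz)⟩
  simp only [Finset.mem_insert, Finset.mem_singleton, not_or] at hz
  obtain ⟨hzx, hzy⟩ := hz
  -- the key step
  have step : ∀ u v₁ v₂ : Fin m, u ≠ x → v₁ ≠ v₂ →
      c (i, x) = (i, x) ∨ c (i, x) = (i, u) ∨ c (i, x) = (j, v₁) ∨ c (i, x) = (j, v₂) := by
    intro u v₁ v₂ hu hv
    set τ : Equiv.Perm (Fin k × Fin m) :=
      Equiv.swap (i, x) (i, u) * Equiv.swap (j, v₁) (j, v₂) with hτdef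
    have hτS := tau_mem i j x u v₁ v₂ (Ne.symm hu) hv
    have hcom := hc τ hτS
    have h1 : τ (c (i, x)) = c (τ (i, x)) := by
      rw [← Equiv.Perm.mul_apply, hcom, Equiv.Perm.mul_apply]
    have hτa : τ (i, x) = (i, u) := by
      have hx1 : ((i, x) : Fin k × Fin m) ≠ (j, v₁) := fun h => hj (congrArg Prod.fst h).symm
      have hx2 : ((i, x) : Fin k × Fin m) ≠ (j, v₂) := fun h => hj (congrArg Prod.fst h).symm
      rw [hτdef, Equiv.Perm.mul_apply, Equiv.swap_apply_of_ne_of_ne hx1 hx2,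
        Equiv.swap_apply_left]
    have hne : τ (c (i, x)) ≠ c (i, x) := by
      rw [h1, hτa]
      intro h
      exact hu (congrArg Prod.snd (c.injective h))
    exact key_mem _ _ _ _ _ hne
  have S1 := step y x y hyx (Ne.symm hyx)
  have S2 := step z x y hzx (Ne.symm hyx)
  have S3 := step y x z hyx (Ne.symm hzx)
  have S4 := step z y z hzx (Ne.symm hzy)
  clear S2 step hc
  rcases S1 with h1 | h1 | h1 | h1
  · exact h1
  · rw [h1] at S4
    rcases S4 with h | h | h | h <;> simp only [Prod.mk.injEq] at h <;>
      first
      | exact absurd h.1 (Ne.symm hj)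
      | exact absurd h.2 hyx
      | exact absurd h.2 (Ne.symm hzy)
  · rw [h1] at S4
    rcases S4 with h | h | h | h <;> simp only [Prod.mk.injEq] at h <;>
      first
      | exact absurd h.1 hj
      | exact absurd h.2 (Ne.symm hyx)
      | exact absurd h.2 (Ne.symm hzx)
  · rw [h1] at S3
    rcases S3 with h | h | h | h <;> simp only [Prod.mk.injEq] at h <;>
      first
      | exact absurd h.1 hj
      | exact absurd h.2 hyx
      | exact absurd h.2 (Ne.symm hzy)
end

section
/- Let m₁ + m₂ + ⋯ + m_r = n where no mᵢ equals 2 and at most one mᵢ equals 1, with each mᵢ ≥ 1 and n ≥ 5. Embed S_{m₁} × ⋯ × S_{m_r} into Sₙ naturally (acting on consecutive blocks of sizes m₁,…,m_r). Then the centralizer of S_{m₁} × ⋯ × S_{m_r} in Sₙ is trivial. -/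
lemma exists_third_aux {n : ℕ} (hn : 3 ≤ n) (a c : Fin n) :
    ∃ b : Fin n, b ≠ a ∧ b ≠ c := by
  by_contra h
  push_neg at h
  have hsub : (Finset.univ : Finset (Fin n)) ⊆ {a, c} := by
    intro b _
    rcases eq_or_ne b a with hb | hb
    · simp [hb]
    · simp [h b hb]
  have hcard := Finset.card_le_card hsub
  have h2 : ({a, c} : Finset (Fin n)).card ≤ 2 :=
    (Finset.card_insert_le _ _).trans (by simp)
  simp [Finset.card_univ] at hcard
  omega

lemma swap_mem_aux {r : ℕ} {m : Fin r → ℕ} (j : Fin r) (a b : Fin (m j)) :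
    ∀ z : Σ i, Fin (m i),
      (Equiv.swap (⟨j, a⟩ : Σ i, Fin (m i)) ⟨j, b⟩ z).1 = z.1 := by
  intro z
  rcases eq_or_ne z ⟨j, a⟩ with h | h
  · subst h; simp
  rcases eq_or_ne z ⟨j, b⟩ with h' | h'
  · subst h'; simp
  · rw [Equiv.swap_apply_of_ne_of_ne h h']

/-- Let n = m₁ + ⋯ + m_r with no mᵢ = 2, at most one mᵢ = 1, each mᵢ ≥ 1 and
n ≥ 5.  Model the n letters as the sigma type Σ i, Fin (m i); the naturally
embedded subgroup S_{m₁} × ⋯ × S_{m_r} of Sₙ is exactly the set of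
permutations preserving each block fiberwise.  Its centralizer in Sₙ is
trivial. -/
theorem centralizer_blockwise_product_trivial
    {r : ℕ} (m : Fin r → ℕ)
    (h1 : ∀ i, 1 ≤ m i) (h2 : ∀ i, m i ≠ 2)
    (hone : ∀ i j, m i = 1 → m j = 1 → i = j)
    (hn : 5 ≤ ∑ i, m i) :
    Subgroup.centralizer
      {σ : Equiv.Perm (Σ i : Fin r, Fin (m i)) | ∀ x, (σ x).1 = x.1} = ⊥ := by
  rw [eq_bot_iff]
  intro g hg
  rw [Subgroup.mem_centralizer_iff] at hg
  have comm : ∀ h ∈ {σ : Equiv.Perm (Σ i : Fin r, Fin (m i)) | ∀ x, (σ x).1 = x.1},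
      ∀ z, h (g z) = g (h z) := by
    intro h hS z
    have := hg h hS
    have := congrArg (fun σ => σ z) this
    simpa [Equiv.Perm.mul_apply] using this
  rw [Subgroup.mem_bot]
  apply Equiv.ext
  rintro ⟨i, u⟩
  simp only [Equiv.Perm.one_apply]
  by_contra hx
  rcases hgx : g ⟨i, u⟩ with ⟨j, v⟩
  rw [hgx] at hx
  -- Step 1 : m j = 1
  have hj1 : m j = 1 := by
    by_contra hj
    have hj3 : 3 ≤ m j := by
      have := h1 j; have := h2 j; omega
    by_cases hij : i = j
    · subst hij
      have huv : v ≠ u := by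
        intro h; exact hx (by rw [h])
      obtain ⟨b, hb1, hb2⟩ := exists_third_aux hj3 v u
      have hkey := comm (Equiv.swap ⟨i, v⟩ ⟨i, b⟩) (swap_mem_aux i v b) ⟨i, u⟩
      rw [hgx, Equiv.swap_apply_left,
        Equiv.swap_apply_of_ne_of_ne
          (by intro h; exact huv (by injection h with h1 h2; exact h2.symm))
          (by intro h; exact hb2 (by injection h with h1 h2; exact h2.symm)),
        hgx] at hkey
      injection hkey with _ h2
      exact hb1 (h2)
    · obtain ⟨b, hb1, _⟩ := exists_third_aux hj3 v v
      have hkey := comm (Equiv.swap ⟨j, v⟩ ⟨j, b⟩) (swap_mem_aux j v b) ⟨i, u⟩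
      rw [hgx, Equiv.swap_apply_left,
        Equiv.swap_apply_of_ne_of_ne
          (by intro h; exact hij (by injection h))
          (by intro h; exact hij (by injection h)),
        hgx] at hkey
      injection hkey with _ h2
      exact hb1 (h2)
  -- Step 2 : m i = 1
  have hi1 : m i = 1 := by
    by_contra hi
    have hi3 : 3 ≤ m i := by
      have := h1 i; have := h2 i; omega
    have hij : j ≠ i := by
      intro h; rw [h] at hj1; omega
    obtain ⟨c, hc1, _⟩ := exists_third_aux hi3 u u
    have hkey := comm (Equiv.swap ⟨i, u⟩ ⟨i, c⟩) (swap_mem_aux i u c) ⟨i, u⟩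
    rw [hgx,
      Equiv.swap_apply_of_ne_of_ne
        (by intro h; exact hij (by injection h))
        (by intro h; exact hij (by injection h)),
      Equiv.swap_apply_left, ← hgx] at hkey
    have := g.injective hkey.symm
    injection this with _ h2
    exact hc1 (h2)
  -- Step 3 : conclude
  have hijeq : i = j := hone i j hi1 hj1
  subst hijeq
  have : v = u := by
    apply Fin.ext
    have hv := v.isLt
    have hu := u.isLt
    omega
  exact hx (by rw [this])
end

section
/- Let n ≥ 5, n ≠ 6. If φ is an automorphism of the alternating group Aₙ that fixes pointwise the subgroup A_{n-1} (even permutations fixing the letter n), then φ is the identity automorphism. -/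
open Equiv Equiv.Perm

section
variable {n : ℕ}
private def c3 (x y z : Fin n) : Equiv.Perm (Fin n) :=
  Equiv.swap x z * Equiv.swap x y
private lemma c3_fst {x y z : Fin n} (hyx : y ≠ x) (hyz : y ≠ z) :
    c3 x y z x = y := by
  show (Equiv.swap x z) ((Equiv.swap x y) x) = y
  rw [Equiv.swap_apply_left, Equiv.swap_apply_of_ne_of_ne hyx hyz]
private lemma c3_snd {x y z : Fin n} : c3 x y z y = z := by
  show (Equiv.swap x z) ((Equiv.swap x y) y) = z
  rw [Equiv.swap_apply_right, Equiv.swap_apply_left]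
private lemma c3_trd {x y z : Fin n} (hzx : z ≠ x) (hzy : z ≠ y) :
    c3 x y z z = x := by
  show (Equiv.swap x z) ((Equiv.swap x y) z) = x
  rw [Equiv.swap_apply_of_ne_of_ne hzx hzy, Equiv.swap_apply_right]
private lemma c3_other {x y z v : Fin n} (hvx : v ≠ x) (hvy : v ≠ y)
    (hvz : v ≠ z) : c3 x y z v = v := by
  show (Equiv.swap x z) ((Equiv.swap x y) v) = v
  rw [Equiv.swap_apply_of_ne_of_ne hvx hvy, Equiv.swap_apply_of_ne_of_ne hvx hvz]
private lemma c3_sign {x y z : Fin n} (hxz : x ≠ z) (hxy : x ≠ y) :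
    Equiv.Perm.sign (c3 x y z) = 1 := by
  simp [c3, Equiv.Perm.sign_swap hxz, Equiv.Perm.sign_swap hxy]
private lemma c3_rot {x y z : Fin n} (hxy : x ≠ y) (hxz : x ≠ z) (hyz : y ≠ z) :
    c3 x y z = c3 y z x := by
  refine Equiv.ext fun v => ?_
  by_cases h1 : v = x
  · subst h1; rw [c3_fst hxy.symm hyz, c3_trd hxy hxz]
  by_cases h2 : v = y
  · subst h2; rw [c3_snd, c3_fst hyz.symm hxz.symm]
  by_cases h3 : v = z
  · subst h3; rw [c3_trd h1 h2, c3_snd]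
  · rw [c3_other h1 h2 h3, c3_other h2 h3 h1]
private lemma commA {w x y : Fin n} (hwx : w ≠ x) (hxy : x ≠ y) (d : Equiv.Perm (Fin n))
    (hcomm : d * c3 w x y = c3 w x y * d) :
    d w = w ∨ d w = x ∨ d w = y := by
  by_contra hcon
  push_neg at hcon
  obtain ⟨h1, h2, h3⟩ := hcon
  have key : (c3 w x y) (d w) = d ((c3 w x y) w) := by
    rw [← Equiv.Perm.mul_apply, ← Equiv.Perm.mul_apply, hcomm]
  rw [c3_other h1 h2 h3, c3_fst hwx.symm hxy] at key
  exact hwx (d.injective key)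

private lemma L5 {a b p x y : Fin n} (d : Equiv.Perm (Fin n))
    (hab : a ≠ b) (hap : a ≠ p) (hax : a ≠ x) (hay : a ≠ y)
    (hbp : b ≠ p) (hbx : b ≠ x) (hby : b ≠ y)
    (hpx : p ≠ x) (hpy : p ≠ y) (hxy : x ≠ y)
    (hcover : ∀ v : Fin n, v = a ∨ v = b ∨ v = p ∨ v = x ∨ v = y)
    (hsign : Equiv.Perm.sign d = 1)
    (hcomm : ∀ h : Equiv.Perm (Fin n), Equiv.Perm.sign h = 1 → h a = a → h b = b →
      d * h = h * d) :
    d a = a ∧ d b = b ∧ (d = 1 ∨ d p = x ∨ d p = y) := by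
  set c := c3 p x y with hc
  have e1 : c p = x := c3_fst hpx.symm hxy
  have e2 : c x = y := c3_snd
  have e3 : c y = p := c3_trd hpy.symm hxy.symm
  have hca : c a = a := c3_other hap hax hay
  have hcb : c b = b := c3_other hbp hbx hby
  have hcsign : Equiv.Perm.sign c = 1 := c3_sign hpy hpx
  have hdc : d * c = c * d := hcomm c hcsign hca hcb
  have trio : ∀ g : Equiv.Perm (Fin n), g * c = c * g →
      (g p = p ∨ g p = x ∨ g p = y) ∧ (g x = p ∨ g x = x ∨ g x = y) ∧
      (g y = p ∨ g y = x ∨ g y = y) := by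
    intro g hgc
    have r1 : c3 p x y = c3 x y p := c3_rot hpx hpy hxy
    have r2 : c3 x y p = c3 y p x := c3_rot hxy hpx.symm hpy.symm
    refine ⟨commA hpx hxy g hgc, ?_, ?_⟩
    · have := commA hxy hpy.symm g (by rw [← r1]; exact hgc)
      tauto
    · have := commA hpy.symm hpx g (by rw [← r2, ← r1]; exact hgc)
      tauto
  have hconj : ∀ (g : Equiv.Perm (Fin n)), g * c = c * g → ∀ v, c (g v) = g (c v) := by
    intro g hgc v
    rw [← Equiv.Perm.mul_apply, ← Equiv.Perm.mul_apply, hgc]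
  have main : ∀ g : Equiv.Perm (Fin n), g a = a → g b = b → g * c = c * g →
      g = 1 ∨ g = c ∨ g = c * c := by
    intro g hga hgb hgc
    have hgx : g x = c (g p) := by rw [hconj g hgc p, e1]
    have hgy : g y = c (g x) := by rw [hconj g hgc x, e2]
    rcases (trio g hgc).1 with h | h | h
    · left; refine Equiv.ext fun v => ?_
      rcases hcover v with rfl | rfl | rfl | rfl | rfl
      · simpa using hga
      · simpa using hgb
      · simpa using h
      · simp [hgx, h, e1]
      · simp [hgy, hgx, h, e1, e2]
    · right; left; refine Equiv.ext fun v => ?_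
      rcases hcover v with rfl | rfl | rfl | rfl | rfl
      · rw [hga, hca]
      · rw [hgb, hcb]
      · rw [h, e1]
      · rw [hgx, h, e2]
      · rw [hgy, hgx, h, e2, e3]
    · right; right; refine Equiv.ext fun v => ?_
      rcases hcover v with rfl | rfl | rfl | rfl | rfl
      · rw [Equiv.Perm.mul_apply, hga, hca, hca]
      · rw [Equiv.Perm.mul_apply, hgb, hcb, hcb]
      · rw [Equiv.Perm.mul_apply, h, e1, e2]
      · rw [Equiv.Perm.mul_apply, hgx, h, e3, e2, e3]
      · rw [Equiv.Perm.mul_apply, hgy, hgx, h]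
  have hdc' : d⁻¹ * c = c * d⁻¹ := by
    calc d⁻¹ * c = d⁻¹ * (c * d) * d⁻¹ := by group
    _ = d⁻¹ * (d * c) * d⁻¹ := by rw [hdc]
    _ = c * d⁻¹ := by group
  have hmem : ∀ v : Fin n, (v = a ∨ v = b) → (d v = a ∨ d v = b) := by
    intro v hv
    rcases hcover (d v) with h | h | h | h | h
    · left; exact h
    · right; exact h
    · exfalso
      have hv' : v = d⁻¹ p := by rw [← h, Equiv.Perm.coe_inv, Equiv.symm_apply_apply]
      rcases (trio d⁻¹ hdc').1 with h2 | h2 | h2 <;> rw [← hv'] at h2 <;>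
        rcases hv with rfl | rfl <;> first
          | exact hap h2 | exact hax h2 | exact hay h2
          | exact hbp h2 | exact hbx h2 | exact hby h2
    · exfalso
      have hv' : v = d⁻¹ x := by rw [← h, Equiv.Perm.coe_inv, Equiv.symm_apply_apply]
      rcases (trio d⁻¹ hdc').2.1 with h2 | h2 | h2 <;> rw [← hv'] at h2 <;>
        rcases hv with rfl | rfl <;> first
          | exact hap h2 | exact hax h2 | exact hay h2
          | exact hbp h2 | exact hbx h2 | exact hby h2
    · exfalso
      have hv' : v = d⁻¹ y := by rw [← h, Equiv.Perm.coe_inv, Equiv.symm_apply_apply]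
      rcases (trio d⁻¹ hdc').2.2 with h2 | h2 | h2 <;> rw [← hv'] at h2 <;>
        rcases hv with rfl | rfl <;> first
          | exact hap h2 | exact hax h2 | exact hay h2
          | exact hbp h2 | exact hbx h2 | exact hby h2
  rcases hmem a (Or.inl rfl) with hda | hda
  · have hdb : d b = b := by
      rcases hmem b (Or.inr rfl) with h | h
      · exact absurd (d.injective (hda.trans h.symm)) hab
      · exact h
    refine ⟨hda, hdb, ?_⟩
    rcases main d hda hdb hdc with rfl | rfl | rfl
    · left; rfl
    · right; left; exact e1
    · right; right; rw [Equiv.Perm.mul_apply, e1, e2]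
  · exfalso
    have hdb : d b = a := by
      rcases hmem b (Or.inr rfl) with h | h
      · exact h
      · exact absurd (d.injective (hda.trans h.symm)) (fun hh => hab hh)
    set g := Equiv.swap a b * d with hg
    have hga : g a = a := by
      rw [hg, Equiv.Perm.mul_apply, hda, Equiv.swap_apply_right]
    have hgb : g b = b := by
      rw [hg, Equiv.Perm.mul_apply, hdb, Equiv.swap_apply_left]
    have hswapc : Equiv.swap a b * c = c * Equiv.swap a b := by
      refine Equiv.ext fun v => ?_
      rcases hcover v with rfl | rfl | rfl | rfl | rfl <;>
        rw [Equiv.Perm.mul_apply, Equiv.Perm.mul_apply]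
      · rw [hca, Equiv.swap_apply_left, hcb]
      · rw [hcb, Equiv.swap_apply_right, hca]
      · rw [e1, Equiv.swap_apply_of_ne_of_ne hax.symm hbx.symm,
          Equiv.swap_apply_of_ne_of_ne hap.symm hbp.symm, e1]
      · rw [e2, Equiv.swap_apply_of_ne_of_ne hay.symm hby.symm,
          Equiv.swap_apply_of_ne_of_ne hax.symm hbx.symm, e2]
      · rw [e3, Equiv.swap_apply_of_ne_of_ne hap.symm hbp.symm,
          Equiv.swap_apply_of_ne_of_ne hay.symm hby.symm, e3]
    have hgc : g * c = c * g := by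
      rw [hg, mul_assoc, hdc, ← mul_assoc, hswapc, mul_assoc]
    have hgsign : Equiv.Perm.sign g = -1 := by
      rw [hg, map_mul, Equiv.Perm.sign_swap hab, hsign, mul_one]
    rcases main g hga hgb hgc with h | h | h <;> rw [h] at hgsign
    · simp at hgsign
    · rw [hcsign] at hgsign; exact absurd hgsign (by decide)
    · rw [map_mul, hcsign, mul_one] at hgsign; exact absurd hgsign (by decide)

private lemma fix3 (hn : 5 ≤ n) (φ : MulAut (alternatingGroup (Fin n)))
    (hφ : ∀ g : alternatingGroup (Fin n),
      (g : Equiv.Perm (Fin n)) (⟨n - 1, Nat.sub_lt (by omega) Nat.one_pos⟩ : Fin n) = ⟨n - 1, Nat.sub_lt (by omega) Nat.one_pos⟩ → φ g = g)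
    (p q : Fin n) (hpq : p ≠ q) (hpe : p ≠ ⟨n - 1, Nat.sub_lt (by omega) Nat.one_pos⟩) (hqe : q ≠ ⟨n - 1, Nat.sub_lt (by omega) Nat.one_pos⟩)
    (T : alternatingGroup (Fin n))
    (hT : (T : Equiv.Perm (Fin n)) = c3 (⟨n - 1, Nat.sub_lt (by omega) Nat.one_pos⟩ : Fin n) p q) :
    φ T = T := by
  set en : Fin n := ⟨n - 1, by omega⟩ with hen
  set t : Equiv.Perm (Fin n) := c3 en p q with htdef
  have hep : en ≠ p := hpe.symm
  have heq : en ≠ q := hqe.symm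
  have t1 : t en = p := c3_fst hpe hpq
  have t2 : t p = q := c3_snd
  have t3 : t q = en := c3_trd hqe hpq.symm
  have tinv1 : t⁻¹ p = en := by rw [← t1, Equiv.Perm.coe_inv, Equiv.symm_apply_apply]
  have tinv2 : t⁻¹ q = p := by rw [← t2, Equiv.Perm.coe_inv, Equiv.symm_apply_apply]
  have tinv3 : t⁻¹ en = q := by rw [← t3, Equiv.Perm.coe_inv, Equiv.symm_apply_apply]
  have tsign : Equiv.Perm.sign t = 1 := c3_sign heq hep
  set u : Equiv.Perm (Fin n) := ((φ T : alternatingGroup (Fin n)) : Equiv.Perm (Fin n))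
    with hu
  have husign : Equiv.Perm.sign u = 1 := Equiv.Perm.mem_alternatingGroup.mp (φ T).2
  set d : Equiv.Perm (Fin n) := t⁻¹ * u with hd
  have hdsign : Equiv.Perm.sign d = 1 := by
    rw [hd, map_mul, map_inv, tsign, husign]; rfl
  -- the key conjugation relation
  have key : ∀ h : Equiv.Perm (Fin n), Equiv.Perm.sign h = 1 → h en = en →
      ∀ H : alternatingGroup (Fin n), (H : Equiv.Perm (Fin n)) = h → φ H = H := by
    intro h hs hfix H hH
    exact hφ H (by rw [hH]; exact hfix)
  have conj1 : ∀ h : Equiv.Perm (Fin n), Equiv.Perm.sign h = 1 → h q = q → h en = en →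
      u * h * u⁻¹ = t * h * t⁻¹ := by
    intro h hs h1 h2
    have hmem : h ∈ alternatingGroup (Fin n) := Equiv.Perm.mem_alternatingGroup.mpr hs
    set H : alternatingGroup (Fin n) := ⟨h, hmem⟩ with hH
    have hfixH : φ H = H := hφ H h2
    have hcoe : ((T * H * T⁻¹ : alternatingGroup (Fin n)) : Equiv.Perm (Fin n))
        = t * h * t⁻¹ := by
      push_cast [hT, hH]
      rfl
    have happ : ((T * H * T⁻¹ : alternatingGroup (Fin n)) : Equiv.Perm (Fin n)) en = en := by
      rw [hcoe, Equiv.Perm.mul_apply, Equiv.Perm.mul_apply, tinv3, h1, t3]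
    have h3 : φ (T * H * T⁻¹) = T * H * T⁻¹ := hφ _ happ
    rw [map_mul, map_mul, map_inv, hfixH] at h3
    have h4 := congrArg (fun z : alternatingGroup (Fin n) => (z : Equiv.Perm (Fin n))) h3
    simpa [hcoe, hu] using h4
  have conj2 : ∀ h : Equiv.Perm (Fin n), Equiv.Perm.sign h = 1 → h p = p → h en = en →
      u * (u * h * u⁻¹) * u⁻¹ = t * (t * h * t⁻¹) * t⁻¹ := by
    intro h hs h1 h2
    have hmem : h ∈ alternatingGroup (Fin n) := Equiv.Perm.mem_alternatingGroup.mpr hs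
    set H : alternatingGroup (Fin n) := ⟨h, hmem⟩ with hH
    have hfixH : φ H = H := hφ H h2
    have hcoe : ((T * (T * H * T⁻¹) * T⁻¹ : alternatingGroup (Fin n)) : Equiv.Perm (Fin n))
        = t * (t * h * t⁻¹) * t⁻¹ := by
      push_cast [hT, hH]
      rfl
    have happ : ((T * (T * H * T⁻¹) * T⁻¹ : alternatingGroup (Fin n)) :
        Equiv.Perm (Fin n)) en = en := by
      rw [hcoe]
      simp only [Equiv.Perm.mul_apply]
      rw [tinv3, tinv2, h1, t2, t3]
    have h3 : φ (T * (T * H * T⁻¹) * T⁻¹) = T * (T * H * T⁻¹) * T⁻¹ := hφ _ happ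
    rw [map_mul, map_mul, map_mul, map_mul, map_inv, hfixH] at h3
    have h4 := congrArg (fun z : alternatingGroup (Fin n) => (z : Equiv.Perm (Fin n))) h3
    simpa [hcoe, hu] using h4
  have hcommd : ∀ h : Equiv.Perm (Fin n), Equiv.Perm.sign h = 1 → h q = q → h en = en →
      d * h = h * d := by
    intro h hs h1 h2
    have hconj := conj1 h hs h1 h2
    have h5 : d * h * d⁻¹ = h := by
      calc d * h * d⁻¹ = t⁻¹ * (u * h * u⁻¹) * t := by rw [hd]; group
      _ = t⁻¹ * (t * h * t⁻¹) * t := by rw [hconj]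
      _ = h := by group
    calc d * h = (d * h * d⁻¹) * d := by group
    _ = h * d := by rw [h5]
  -- now split on n
  rcases Nat.lt_or_ge n 6 with h6 | h6
  · -- n = 5 case
    have hn5 : n = 5 := by omega
    subst hn5
    -- get the two remaining points
    have hcard : ({p, q, en} : Finset (Fin 5)).card = 3 := by
      rw [Finset.card_insert_of_notMem (by simp [hpq, hpe]),
        Finset.card_insert_of_notMem (by simp [hqe]), Finset.card_singleton]
    have hccard : ({p, q, en} : Finset (Fin 5))ᶜ.card = 2 := by
      rw [Finset.card_compl, hcard]; rfl
    obtain ⟨x, y, hxy, hset⟩ := Finset.card_eq_two.mp hccard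
    have hxmem : x ∈ ({p, q, en} : Finset (Fin 5))ᶜ := by rw [hset]; simp
    have hymem : y ∈ ({p, q, en} : Finset (Fin 5))ᶜ := by rw [hset]; simp
    simp only [Finset.mem_compl, Finset.mem_insert, Finset.mem_singleton, not_or] at hxmem hymem
    obtain ⟨hxp, hxq, hxe⟩ := hxmem
    obtain ⟨hyp, hyq, hye⟩ := hymem
    have hxp : x ≠ p := hxp
    have hxq : x ≠ q := hxq
    have hxe : x ≠ en := hxe
    have hyp : y ≠ p := hyp
    have hyq : y ≠ q := hyq
    have hye : y ≠ en := hye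
    have hcover : ∀ v : Fin 5, v = q ∨ v = en ∨ v = p ∨ v = x ∨ v = y := by
      intro v
      by_cases h1 : v = q; · exact Or.inl h1
      by_cases h2 : v = en; · exact Or.inr (Or.inl h2)
      by_cases h3 : v = p; · exact Or.inr (Or.inr (Or.inl h3))
      have hv : v ∈ ({p, q, en} : Finset (Fin 5))ᶜ := by
        simp only [Finset.mem_compl, Finset.mem_insert, Finset.mem_singleton, not_or]
        exact ⟨h3, h1, h2⟩
      rw [hset] at hv
      simp only [Finset.mem_insert, Finset.mem_singleton] at hv
      rcases hv with h | h
      · exact Or.inr (Or.inr (Or.inr (Or.inl h)))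
      · exact Or.inr (Or.inr (Or.inr (Or.inr h)))
    have tx : t x = x := c3_other hxe hxp hxq
    have ty : t y = y := c3_other hye hyp hyq
    have tinvx : t⁻¹ x = x := by rw [Equiv.Perm.inv_eq_iff_eq, tx]
    have tinvy : t⁻¹ y = y := by rw [Equiv.Perm.inv_eq_iff_eq, ty]
    obtain ⟨hdq, hden, hdcase⟩ := L5 d hqe hpq.symm hxq.symm hyq.symm hpe.symm hxe.symm
      hye.symm hxp.symm hyp.symm hxy hcover hdsign hcommd
    set d2 : Equiv.Perm (Fin 5) := t⁻¹ * d * t * d with hd2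
    have hd2sign : Equiv.Perm.sign d2 = 1 := by
      rw [hd2, map_mul, map_mul, map_mul, map_inv, tsign, hdsign]; rfl
    have hcommd2 : ∀ h : Equiv.Perm (Fin 5), Equiv.Perm.sign h = 1 → h p = p → h en = en →
        d2 * h = h * d2 := by
      intro h hs h1 h2
      have hconj := conj2 h hs h1 h2
      have h5 : d2 * h * d2⁻¹ = h := by
        calc d2 * h * d2⁻¹ = t⁻¹ * t⁻¹ * (u * (u * h * u⁻¹) * u⁻¹) * (t * t) := by
              simp only [hd2, hd, mul_inv_rev, inv_inv, mul_assoc, inv_mul_cancel_left,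
                mul_inv_cancel_left]
        _ = t⁻¹ * t⁻¹ * (t * (t * h * t⁻¹) * t⁻¹) * (t * t) := by rw [hconj]
        _ = h := by group
      calc d2 * h = (d2 * h * d2⁻¹) * d2 := by group
      _ = h * d2 := by rw [h5]
    have hcover2 : ∀ v : Fin 5, v = p ∨ v = en ∨ v = q ∨ v = x ∨ v = y := by
      intro v
      rcases hcover v with h | h | h | h | h
      · exact Or.inr (Or.inr (Or.inl h))
      · exact Or.inr (Or.inl h)
      · exact Or.inl h
      · exact Or.inr (Or.inr (Or.inr (Or.inl h)))
      · exact Or.inr (Or.inr (Or.inr (Or.inr h)))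
    obtain ⟨-, hd2en, -⟩ := L5 d2 hpe hpq hxp.symm hyp.symm heq hxe.symm hye.symm
      hxq.symm hyq.symm hxy hcover2 hd2sign hcommd2
    -- conclude d = 1
    have hd1 : d = 1 := by
      rcases hdcase with h | h | h
      · exact h
      · exfalso
        have : d2 en = x := by
          rw [hd2]
          simp only [Equiv.Perm.mul_apply]
          rw [hden, t1, h, tinvx]
        rw [hd2en] at this
        exact hxe (this.symm)
      · exfalso
        have : d2 en = y := by
          rw [hd2]
          simp only [Equiv.Perm.mul_apply]
          rw [hden, t1, h, tinvy]
        rw [hd2en] at this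
        exact hye (this.symm)
    have hut : u = t := by
      have : t⁻¹ * u = 1 := by rw [← hd, hd1]
      exact (inv_mul_eq_one.mp this).symm
    exact Subtype.ext (by rw [← hu, hut, ← hT])
  · -- n ≥ 6 case
    have hfix : ∀ w : Fin n, w ≠ q → w ≠ en → d w = w := by
      intro w hwq hwe
      -- find three fresh points
      have hcard3 : ({q, en, w} : Finset (Fin n)).card ≤ 3 := by
        have h1 := Finset.card_insert_le q ({en, w} : Finset (Fin n))
        have h2 := Finset.card_insert_le en ({w} : Finset (Fin n))
        have h3 : ({w} : Finset (Fin n)).card = 1 := Finset.card_singleton w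
        omega
      have hccard : 3 ≤ ({q, en, w} : Finset (Fin n))ᶜ.card := by
        rw [Finset.card_compl, Fintype.card_fin]
        omega
      obtain ⟨s, hsub, hscard⟩ := Finset.exists_subset_card_eq hccard
      obtain ⟨x, y, z, hxy, hxz, hyz, rfl⟩ := Finset.card_eq_three.mp hscard
      have hxmem := hsub (by simp : x ∈ ({x, y, z} : Finset (Fin n)))
      have hymem := hsub (by simp : y ∈ ({x, y, z} : Finset (Fin n)))
      have hzmem := hsub (by simp : z ∈ ({x, y, z} : Finset (Fin n)))
      simp only [Finset.mem_compl, Finset.mem_insert, Finset.mem_singleton, not_or] at hxmem hymem hzmem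
      obtain ⟨hxq, hxe, hxw⟩ := hxmem
      obtain ⟨hyq, hye, hyw⟩ := hymem
      obtain ⟨hzq, hze, hzw⟩ := hzmem
      have hxq : x ≠ q := hxq
      have hxe : x ≠ en := hxe
      have hxw : x ≠ w := hxw
      have hyq : y ≠ q := hyq
      have hye : y ≠ en := hye
      have hyw : y ≠ w := hyw
      have hzq : z ≠ q := hzq
      have hze : z ≠ en := hze
      have hzw : z ≠ w := hzw
      have comm1 : d * c3 w x y = c3 w x y * d :=
        hcommd _ (c3_sign (fun h => hyw (h.symm)) (fun h => hxw (h.symm)))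
          (c3_other hwq.symm hxq.symm hyq.symm) (c3_other hwe.symm hxe.symm hye.symm)
      have comm2 : d * c3 w x z = c3 w x z * d :=
        hcommd _ (c3_sign (fun h => hzw (h.symm)) (fun h => hxw (h.symm)))
          (c3_other hwq.symm hxq.symm hzq.symm) (c3_other hwe.symm hxe.symm hze.symm)
      have comm3 : d * c3 w y z = c3 w y z * d :=
        hcommd _ (c3_sign (fun h => hzw (h.symm)) (fun h => hyw (h.symm)))
          (c3_other hwq.symm hyq.symm hzq.symm) (c3_other hwe.symm hye.symm hze.symm)
      have A1 := commA (fun h => hxw (h.symm)) hxy d comm1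
      have A2 := commA (fun h => hxw (h.symm)) hxz d comm2
      have A3 := commA (fun h => hyw (h.symm)) hyz d comm3
      rcases A1 with h | h | h
      · exact h
      · rcases A3 with h' | h' | h'
        · rw [h] at h'; exact absurd h' hxw
        · rw [h] at h'; exact absurd h' hxy
        · rw [h] at h'; exact absurd h' hxz
      · rcases A2 with h' | h' | h'
        · rw [h] at h'; exact absurd h' hyw
        · rw [h] at h'; exact absurd h' (fun hh => hxy hh.symm)
        · rw [h] at h'; exact absurd h' hyz
    have hden : d en ∈ ({q, en} : Set (Fin n)) := by
      by_contra hcon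
      simp only [Set.mem_insert_iff, Set.mem_singleton_iff, not_or] at hcon
      have := hfix (d en) hcon.1 hcon.2
      have heq2 := d.injective this
      rw [heq2] at hcon
      exact hcon.2 rfl
    have hdq : d q ∈ ({q, en} : Set (Fin n)) := by
      by_contra hcon
      simp only [Set.mem_insert_iff, Set.mem_singleton_iff, not_or] at hcon
      have := hfix (d q) hcon.1 hcon.2
      have heq2 := d.injective this
      rw [heq2] at hcon
      exact hcon.1 rfl
    have hd1 : d = 1 := by
      simp only [Set.mem_insert_iff, Set.mem_singleton_iff] at hden hdq
      rcases hden with h1 | h1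
      · -- d en = q : then d = swap q en, odd, contradiction
        exfalso
        have h2 : d q = en := by
          rcases hdq with h | h
          · exact absurd (d.injective (h.trans h1.symm)) hqe
          · exact h
        have : d = Equiv.swap q en := by
          refine Equiv.ext fun v => ?_
          by_cases hv1 : v = q
          · rw [hv1, h2, Equiv.swap_apply_left]
          by_cases hv2 : v = en
          · rw [hv2, h1, Equiv.swap_apply_right]
          · rw [hfix v hv1 hv2, Equiv.swap_apply_of_ne_of_ne hv1 hv2]
        rw [this, Equiv.Perm.sign_swap hqe] at hdsign
        exact absurd hdsign (by decide)
      · have h2 : d q = q := by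
          rcases hdq with h | h
          · exact h
          · exact absurd (d.injective (h.trans h1.symm)) hqe
        refine Equiv.ext fun v => ?_
        by_cases hv1 : v = q
        · rw [hv1, h2]; rfl
        by_cases hv2 : v = en
        · rw [hv2, h1]; rfl
        · rw [hfix v hv1 hv2]; rfl
    have hut : u = t := by
      have : t⁻¹ * u = 1 := by rw [← hd, hd1]
      exact (inv_mul_eq_one.mp this).symm
    exact Subtype.ext (by rw [← hu, hut, ← hT])

/-- For n ≥ 5, n ≠ 6, any automorphism of Aₙ fixing pointwise the subgroup
A_{n-1} (even permutations fixing the letter n) is the identity. -/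
theorem aut_fixing_Anm1_is_id {n : ℕ} (hn : 5 ≤ n) (hn6 : n ≠ 6)
    (φ : MulAut (alternatingGroup (Fin n)))
    (hφ : ∀ g : alternatingGroup (Fin n),
      (g : Equiv.Perm (Fin n)) (⟨n - 1, by omega⟩ : Fin n) = ⟨n - 1, by omega⟩ → φ g = g) :
    ∀ g : alternatingGroup (Fin n), φ g = g := by
  intro g
  set en : Fin n := ⟨n - 1, by omega⟩ with hen
  by_cases hg : (g : Equiv.Perm (Fin n)) en = en
  · exact hφ g hg
  · set p : Fin n := (g : Equiv.Perm (Fin n)) en with hp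
    have hpe : p ≠ en := hg
    have hqex : (({p, en} : Finset (Fin n))ᶜ).Nonempty := by
      rw [← Finset.card_pos, Finset.card_compl, Fintype.card_fin]
      have h1 := Finset.card_insert_le p ({en} : Finset (Fin n))
      have h2 : ({en} : Finset (Fin n)).card = 1 := Finset.card_singleton en
      omega
    obtain ⟨q, hq⟩ := hqex
    simp only [Finset.mem_compl, Finset.mem_insert, Finset.mem_singleton, not_or] at hq
    have hqp : q ≠ p := hq.1
    have hqe : q ≠ en := hq.2
    have htmem : c3 en p q ∈ alternatingGroup (Fin n) :=
      Equiv.Perm.mem_alternatingGroup.mpr (c3_sign hqe.symm hpe.symm)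
    set T : alternatingGroup (Fin n) := ⟨c3 en p q, htmem⟩ with hTdef
    have hT : φ T = T := fix3 hn φ hφ p q hqp.symm hpe hqe T rfl
    have hfix2 : φ (T⁻¹ * g) = T⁻¹ * g := by
      apply hφ
      have hcoe : ((T⁻¹ * g : alternatingGroup (Fin n)) : Equiv.Perm (Fin n))
          = (c3 en p q)⁻¹ * (g : Equiv.Perm (Fin n)) := by push_cast [hTdef]; rfl
      rw [hcoe, Equiv.Perm.mul_apply, ← hp]
      have : (c3 en p q) en = p := c3_fst hpe hqp.symm
      rw [Equiv.Perm.inv_eq_iff_eq, this]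
    have hsplit : φ g = φ T * φ (T⁻¹ * g) := by
      rw [← map_mul, mul_inv_cancel_left]
    rw [hsplit, hT, hfix2, mul_inv_cancel_left]

end
end
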